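/- arXiv:1603.00349 — 5 statements merged into one kernel-verified Lean document; each statement's English description precedes it below -/
import Mathlib

section
/- Let F(c) = ∑_{i=1}^{n} p_i ∑_{t=0}^{N} exp(−ξ(θ − ω_i/ξ)·S_t(c) + B_{i,t}) where S_t(c) = ∑_{k=1}^{t} c_k and B_{i,t} are constants. If θξ ≥ max_i ω_i, then the front-loaded bang-bang schedule c* (c*_t = c_max for t ≤ k, c*_{k+1} = C_max − k·c_max, c*_t = 0 otherwise, k = ⌊C_max/c_max⌋) minimizes F over all c with 0 ≤ c_t ≤ c_max and ∑ c_t = C_max. -/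
open Finset Real

/-!
Since `θξ ≥ ωᵢ`, every term of `F` is a nonincreasing function of the cumulative dose `S_t(c)`,
so it suffices that the front-loaded schedule maximizes all partial sums `S_t` at once: up to the
switching time it has delivered the maximal dose `t · c_max`, and after it the whole budget `C_max`.
-/

/-- The partial-sum comparison below holds for every `k`; the choice `k = ⌊C / a⌋₊` only makes
the schedule itself admissible. -/
def frontLoaded (a C : ℝ) (k : ℕ) (s : ℕ) : ℝ :=
  if s < k then a else if s = k then C - k * a else 0

theorem sum_range_frontLoaded (a C : ℝ) (k t : ℕ) :
    ∑ s ∈ range t, frontLoaded a C k s = if t ≤ k then t * a else C := by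
  induction t with
  | zero => simp
  | succ t ih =>
    rw [sum_range_succ, ih, frontLoaded]
    split_ifs <;> first | omega | (subst_vars; push_cast; ring)

theorem sum_range_le_sum_range_frontLoaded {N : ℕ} {a C : ℝ} {c : ℕ → ℝ}
    (hc : ∀ s, s < N → 0 ≤ c s ∧ c s ≤ a) (hsum : ∑ s ∈ range N, c s = C) (k : ℕ)
    {t : ℕ} (ht : t ≤ N) :
    ∑ s ∈ range t, c s ≤ ∑ s ∈ range t, frontLoaded a C k s := by
  rw [sum_range_frontLoaded]
  split_ifs
  · simpa using sum_le_card_nsmul (range t) c a fun s hs => (hc s ((mem_range.1 hs).trans_le ht)).2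
  · rw [← hsum]
    exact sum_le_sum_of_subset_of_nonneg (range_subset_range.2 ht)
      fun s hs _ => (hc s (mem_range.1 hs)).1

theorem front_loaded_optimal_of_theta_xi_large_general
    (n N : ℕ) (p ω : ℕ → ℝ) (B : ℕ → ℕ → ℝ) (ξ θ cmax Cmax : ℝ)
    (hp : ∀ i, i < n → 0 < p i)
    (hξ : 0 < ξ)
    (hcond : ∀ i, i < n → ω i ≤ θ * ξ) :
    ∀ c : ℕ → ℝ,
      (∀ s, s < N → 0 ≤ c s ∧ c s ≤ cmax) →
      (∑ s ∈ Finset.range N, c s = Cmax) →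
      ∑ i ∈ Finset.range n, p i *
          ∑ t ∈ Finset.range (N + 1),
            Real.exp (-(ξ * (θ - ω i / ξ)) *
              (∑ k ∈ Finset.range t,
                (fun s => if s < ⌊Cmax / cmax⌋₊ then cmax
                  else if s = ⌊Cmax / cmax⌋₊ then Cmax - ⌊Cmax / cmax⌋₊ * cmax
                  else 0) k) + B i t) ≤
        ∑ i ∈ Finset.range n, p i *
          ∑ t ∈ Finset.range (N + 1),
            Real.exp (-(ξ * (θ - ω i / ξ)) *
              (∑ k ∈ Finset.range t, c k) + B i t) := by
  intro c hc hsum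
  refine sum_le_sum fun i hi => mul_le_mul_of_nonneg_left
    (sum_le_sum fun t ht => exp_le_exp.2 (add_le_add_left ?_ _)) (hp i (mem_range.1 hi)).le
  have hrate : 0 ≤ ξ * (θ - ω i / ξ) := by
    rw [mul_sub, mul_div_cancel₀ _ hξ.ne']
    linarith [hcond i (mem_range.1 hi)]
  exact mul_le_mul_of_nonpos_left
    (sum_range_le_sum_range_frontLoaded hc hsum _ (Nat.lt_succ_iff.1 (mem_range.1 ht)))
    (neg_nonpos.2 hrate)

/-- Theorem 1, case 1: when `θξ ≥ max ωᵢ`, the front-loaded bang-bang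
chemotherapy schedule minimizes the total expected metastatic population. -/
theorem front_loaded_optimal_of_theta_xi_large
    (n N : ℕ) (p ω : ℕ → ℝ) (B : ℕ → ℕ → ℝ) (ξ θ cmax Cmax : ℝ)
    (hp : ∀ i, i < n → 0 < p i) (hω : ∀ i, i < n → 0 ≤ ω i)
    (hξ : 0 < ξ) (hθ : 0 < θ)
    (hcmax : 0 < cmax) (hC0 : 0 < Cmax) (hCN : Cmax < N * cmax)
    (hcond : ∀ i, i < n → ω i ≤ θ * ξ) :
    ∀ c : ℕ → ℝ,
      (∀ s, s < N → 0 ≤ c s ∧ c s ≤ cmax) →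
      (∑ s ∈ Finset.range N, c s = Cmax) →
      ∑ i ∈ Finset.range n, p i *
          ∑ t ∈ Finset.range (N + 1),
            Real.exp (-(ξ * (θ - ω i / ξ)) *
              (∑ k ∈ Finset.range t,
                (fun s => if s < ⌊Cmax / cmax⌋₊ then cmax
                  else if s = ⌊Cmax / cmax⌋₊ then Cmax - ⌊Cmax / cmax⌋₊ * cmax
                  else 0) k) + B i t) ≤
        ∑ i ∈ Finset.range n, p i *
          ∑ t ∈ Finset.range (N + 1),
            Real.exp (-(ξ * (θ - ω i / ξ)) *
              (∑ k ∈ Finset.range t, c k) + B i t) :=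
  front_loaded_optimal_of_theta_xi_large_general n N p ω B ξ θ cmax Cmax hp hξ hcond
end

section
/- Let F(c) = ∑_{i=1}^{n} p_i ∑_{t=0}^{N} exp(−ξ(θ − ω_i/ξ)·S_t(c) + B_{i,t}) where S_t(c) = ∑_{k=1}^{t} c_k. If θξ < min_i ω_i, then the back-loaded bang-bang schedule c* (c*_t = c_max for t ≥ N−k+1, c*_{N−k} = C_max − k·c_max, c*_t = 0 otherwise, k = ⌊C_max/c_max⌋) minimizes F over all c with 0 ≤ c_t ≤ c_max and ∑ c_t = C_max. -/
/-!
With `a i = ωᵢ - θξ > 0`, every summand `exp (a i * S_t(c) + B i t)` of the objective is increasing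
in the cumulative dose `S_t(c)`, so a feasible schedule whose cumulative doses are pointwise
smallest is optimal. Feasibility forces `S_t(c) ≥ max 0 (C - (N - t) * cmax)`, since the remaining
`N - t` periods deliver at most `(N - t) * cmax`; the back-loaded schedule attains this bound for
every `t`.
-/

open Finset Real

noncomputable section

/-- The schedule `c*` of the paper, indexed from `0`: full doses on the last `⌊C / cmax⌋` periods,
the remainder in the period just before them. -/
def backLoaded (N : ℕ) (cmax C : ℝ) (s : ℕ) : ℝ :=
  if N - ⌊C / cmax⌋₊ ≤ s then cmax
  else if s = N - ⌊C / cmax⌋₊ - 1 then C - ⌊C / cmax⌋₊ * cmax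
  else 0

def minCumDose (N : ℕ) (cmax C : ℝ) (t : ℕ) : ℝ :=
  max 0 (C - ((N : ℝ) - t) * cmax)

end

theorem minCumDose_le_sum_range {N t : ℕ} {cmax C : ℝ} {c : ℕ → ℝ}
    (hc : ∀ s, s < N → 0 ≤ c s ∧ c s ≤ cmax) (hsum : ∑ s ∈ range N, c s = C) (ht : t ≤ N) :
    minCumDose N cmax C t ≤ ∑ s ∈ range t, c s := by
  refine max_le (sum_nonneg fun s hs => (hc s ((mem_range.1 hs).trans_le ht)).1) ?_
  have hsplit : ∑ s ∈ range t, c s + ∑ s ∈ Ico t N, c s = C := by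
    rw [← hsum, sum_range_add_sum_Ico c ht]
  have htail : ∑ s ∈ Ico t N, c s ≤ ((N : ℝ) - t) * cmax :=
    calc ∑ s ∈ Ico t N, c s ≤ ∑ _s ∈ Ico t N, cmax :=
          sum_le_sum fun s hs => (hc s (mem_Ico.1 hs).2).2
      _ = ((N : ℝ) - t) * cmax := by
          rw [sum_const, Nat.card_Ico, nsmul_eq_mul, Nat.cast_sub ht]
  linarith

section BackLoaded

variable {N : ℕ} {cmax C : ℝ}

theorem minCumDose_zero (hcmax : 0 < cmax) (hK : ⌊C / cmax⌋₊ + 1 ≤ N) :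
    minCumDose N cmax C 0 = 0 := by
  have hlt : C < (⌊C / cmax⌋₊ + 1) * cmax := (div_lt_iff₀ hcmax).1 (Nat.lt_floor_add_one _)
  have hKN : ((⌊C / cmax⌋₊ + 1 : ℕ) : ℝ) ≤ N := by exact_mod_cast hK
  push_cast at hKN
  refine max_eq_left ?_
  rw [Nat.cast_zero, sub_zero]
  nlinarith [mul_le_mul_of_nonneg_right hKN hcmax.le]

theorem backLoaded_eq_minCumDose_sub (hcmax : 0 < cmax) (hC : 0 ≤ C) (s : ℕ) :
    backLoaded N cmax C s = minCumDose N cmax C (s + 1) - minCumDose N cmax C s := by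
  set K := ⌊C / cmax⌋₊
  have hle : K * cmax ≤ C := (le_div_iff₀ hcmax).1 (Nat.floor_le (div_nonneg hC hcmax.le))
  have hlt : C < (K + 1) * cmax := (div_lt_iff₀ hcmax).1 (Nat.lt_floor_add_one _)
  unfold backLoaded minCumDose
  push_cast
  split_ifs with hlast hedge
  · have h : (N : ℝ) ≤ s + K := by exact_mod_cast (by omega : N ≤ s + K)
    rw [max_eq_right (by nlinarith), max_eq_right (by nlinarith)]
    ring
  · have h : (N : ℝ) = s + K + 1 := by exact_mod_cast (by omega : N = s + K + 1)
    rw [max_eq_right (by rw [h]; nlinarith), max_eq_left (by rw [h]; nlinarith)]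
    rw [h]; ring
  · have h : (s : ℝ) + 1 + (K + 1) ≤ N := by exact_mod_cast (by omega : s + 1 + (K + 1) ≤ N)
    rw [max_eq_left (by nlinarith), max_eq_left (by nlinarith)]
    ring

theorem sum_range_backLoaded (hcmax : 0 < cmax) (hC : 0 ≤ C) (hK : ⌊C / cmax⌋₊ + 1 ≤ N)
    (t : ℕ) : ∑ s ∈ range t, backLoaded N cmax C s = minCumDose N cmax C t := by
  simp only [backLoaded_eq_minCumDose_sub hcmax hC]
  rw [sum_range_sub, minCumDose_zero hcmax hK, sub_zero]

end BackLoaded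

theorem sum_mul_sum_exp_le_of_le {ι τ : Type*} {I : Finset ι} {T : Finset τ} {p a : ι → ℝ}
    {B : ι → τ → ℝ} {S S' : τ → ℝ} (hp : ∀ i ∈ I, 0 ≤ p i) (ha : ∀ i ∈ I, 0 ≤ a i)
    (hS : ∀ t ∈ T, S t ≤ S' t) :
    ∑ i ∈ I, p i * ∑ t ∈ T, exp (a i * S t + B i t) ≤
      ∑ i ∈ I, p i * ∑ t ∈ T, exp (a i * S' t + B i t) :=
  sum_le_sum fun i hi => mul_le_mul_of_nonneg_left
    (sum_le_sum fun t ht => exp_le_exp.2 <|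
      add_le_add_left (mul_le_mul_of_nonneg_left (hS t ht) (ha i hi)) _) (hp i hi)

theorem back_loaded_optimal_of_theta_xi_small_general
    (n N : ℕ) (p ω : ℕ → ℝ) (B : ℕ → ℕ → ℝ) (ξ θ cmax Cmax : ℝ)
    (hp : ∀ i, i < n → 0 < p i)
    (hξ : 0 < ξ)
    (hcmax : 0 < cmax) (hC0 : 0 < Cmax)
    (hkN : ⌊Cmax / cmax⌋₊ + 1 ≤ N)
    (hcond : ∀ i, i < n → θ * ξ < ω i) :
    ∀ c : ℕ → ℝ,
      (∀ s, s < N → 0 ≤ c s ∧ c s ≤ cmax) →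
      (∑ s ∈ Finset.range N, c s = Cmax) →
      ∑ i ∈ Finset.range n, p i *
          ∑ t ∈ Finset.range (N + 1),
            Real.exp (-(ξ * (θ - ω i / ξ)) *
              (∑ k ∈ Finset.range t,
                (fun s => if N - ⌊Cmax / cmax⌋₊ ≤ s then cmax
                  else if s = N - ⌊Cmax / cmax⌋₊ - 1 then
                    Cmax - ⌊Cmax / cmax⌋₊ * cmax
                  else 0) k) + B i t) ≤
        ∑ i ∈ Finset.range n, p i *
          ∑ t ∈ Finset.range (N + 1),
            Real.exp (-(ξ * (θ - ω i / ξ)) *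
              (∑ k ∈ Finset.range t, c k) + B i t) := by
  intro c hc hsum
  refine sum_mul_sum_exp_le_of_le (fun i hi => (hp i (mem_range.1 hi)).le)
    (fun i hi => ?rate) (fun t ht => ?dose)
  case rate =>
    have hrate : -(ξ * (θ - ω i / ξ)) = ω i - θ * ξ := by field_simp; ring
    linarith [hcond i (mem_range.1 hi)]
  case dose =>
    have ht : t ≤ N := Nat.lt_succ_iff.1 (mem_range.1 ht)
    change ∑ k ∈ range t, backLoaded N cmax Cmax k ≤ _
    rw [sum_range_backLoaded hcmax hC0.le hkN]
    exact minCumDose_le_sum_range hc hsum ht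

/-- Theorem 1, case 2: when `θξ < min ωᵢ`, the back-loaded bang-bang
chemotherapy schedule minimizes the total expected metastatic population. -/
theorem back_loaded_optimal_of_theta_xi_small
    (n N : ℕ) (hn : 1 ≤ n) (p ω : ℕ → ℝ) (B : ℕ → ℕ → ℝ) (ξ θ cmax Cmax : ℝ)
    (hp : ∀ i, i < n → 0 < p i) (hω : ∀ i, i < n → 0 < ω i)
    (hξ : 0 < ξ) (hθ : 0 < θ)
    (hcmax : 0 < cmax) (hC0 : 0 < Cmax) (hCN : Cmax < N * cmax)
    (hkN : ⌊Cmax / cmax⌋₊ + 1 ≤ N)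
    (hcond : ∀ i, i < n → θ * ξ < ω i) :
    ∀ c : ℕ → ℝ,
      (∀ s, s < N → 0 ≤ c s ∧ c s ≤ cmax) →
      (∑ s ∈ Finset.range N, c s = Cmax) →
      ∑ i ∈ Finset.range n, p i *
          ∑ t ∈ Finset.range (N + 1),
            Real.exp (-(ξ * (θ - ω i / ξ)) *
              (∑ k ∈ Finset.range t,
                (fun s => if N - ⌊Cmax / cmax⌋₊ ≤ s then cmax
                  else if s = N - ⌊Cmax / cmax⌋₊ - 1 then
                    Cmax - ⌊Cmax / cmax⌋₊ * cmax
                  else 0) k) + B i t) ≤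
        ∑ i ∈ Finset.range n, p i *
          ∑ t ∈ Finset.range (N + 1),
            Real.exp (-(ξ * (θ - ω i / ξ)) *
              (∑ k ∈ Finset.range t, c k) + B i t) :=
  back_loaded_optimal_of_theta_xi_small_general n N p ω B ξ θ cmax Cmax hp hξ hcmax hC0 hkN hcond
end

section
/- Consider minimizing H(d) = ∑_{t=0}^{N} w_t · exp(−ξ · E_{t−1}(d)) over feasible dose vectors d, where E_t(d) = ∑_{k=1}^{t} (α d_k + β d_k²), w_t > 0, ξ > 0, α, β ≥ 0, E_0 = 0, and feasibility constraints depend on d only through ∑ d_k and ∑ d_k² (plus per-day bounds 0 ≤ d_t ≤ d_max). Then there exists an optimal solution d* that is nonincreasing: d*_1 ≥ d*_2 ≥ … ≥ d*_N. -/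
/-!
Sorting the doses of an optimal schedule in decreasing order keeps it feasible, and it can
only lower the cost: the damage `α d + β d²` is increasing in `d ≥ 0`, so after sorting every
prefix of days receives at least as much cumulative damage as before (rearrangement inequality
against the indicator of the prefix), and the cost is decreasing in each cumulative damage.
-/

open Finset Real Equiv

theorem Antitone.sum_comp_perm_le_sum_of_isLowerSet {ι α : Type*} [LinearOrder ι] [Fintype ι]
    [Semiring α] [LinearOrder α] [IsStrictOrderedRing α] [ExistsAddOfLE α]
    {g : ι → α} (hg : Antitone g) {s : Finset ι} (hs : IsLowerSet (s : Set ι)) (σ : Perm ι) :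
    ∑ i ∈ s, g (σ i) ≤ ∑ i ∈ s, g i := by
  classical
  set χ : ι → α := fun i => if i ∈ s then 1 else 0
  have hχ : Antitone χ := fun i j hij => by
    by_cases hj : j ∈ s
    · simp [χ, hj, mem_coe.1 (hs hij hj)]
    · by_cases hi : i ∈ s <;> simp [χ, hi, hj]
  have hsum : ∀ f : ι → α, ∑ i ∈ s, f i = ∑ i, χ i * f i := fun f => by
    simp [χ, ite_mul, Finset.sum_ite_mem]
  rw [hsum, hsum]
  exact (hχ.monovary hg).sum_mul_comp_perm_le_sum_mul

theorem Antitone.const_mul_add_const_mul_sq {ι : Type*} [Preorder ι] {d : ι → ℝ}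
    (hd : Antitone d) (hd₀ : ∀ i, 0 ≤ d i) {α β : ℝ} (hα : 0 ≤ α) (hβ : 0 ≤ β) :
    Antitone fun i => α * d i + β * d i ^ 2 := fun i j hij => by
  have hdj := hd₀ j
  have hdji := hd hij
  dsimp only
  gcongr

theorem Tuple.exists_antitone_comp_perm {n : ℕ} {α : Type*} [LinearOrder α] (d : Fin n → α) :
    ∃ σ : Perm (Fin n), Antitone (d ∘ σ) :=
  ⟨Tuple.sort (OrderDual.toDual ∘ d), Tuple.monotone_sort (OrderDual.toDual ∘ d)⟩

noncomputable def scheduleCost (N : ℕ) (w : ℕ → ℝ) (ξ α β : ℝ) (d : Fin N → ℝ) : ℝ :=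
  ∑ t ∈ range (N + 1), w t * exp (-ξ *
    ∑ k ∈ univ.filter (fun k : Fin N => (k : ℕ) + 1 < t), (α * d k + β * d k ^ 2))

section scheduleCost

variable {N : ℕ} {w : ℕ → ℝ} {ξ α β : ℝ}

theorem continuous_scheduleCost : Continuous (scheduleCost N w ξ α β) := by
  unfold scheduleCost
  fun_prop

theorem scheduleCost_le_comp_perm (hw : ∀ t ≤ N, 0 ≤ w t) (hξ : 0 ≤ ξ) (hα : 0 ≤ α)
    (hβ : 0 ≤ β) {d : Fin N → ℝ} (hd : Antitone d) (hd₀ : ∀ k, 0 ≤ d k) (σ : Perm (Fin N)) :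
    scheduleCost N w ξ α β d ≤ scheduleCost N w ξ α β (d ∘ σ) := by
  refine sum_le_sum fun t ht => ?_
  have hprefix : IsLowerSet (↑(univ.filter fun k : Fin N => (k : ℕ) + 1 < t) : Set (Fin N)) :=
    fun i j hji hi => by
      simp only [coe_filter, mem_univ, true_and, Set.mem_ofPred_eq] at hi ⊢
      exact lt_of_le_of_lt (by simpa using hji) hi
  simp only [neg_mul]
  gcongr ?_ * exp (-(ξ * ?_))
  · exact hw t (by simpa [Nat.lt_succ_iff] using ht)
  · exact (hd.const_mul_add_const_mul_sq hd₀ hα hβ).sum_comp_perm_le_sum_of_isLowerSet hprefix σ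

end scheduleCost

theorem exists_nonincreasing_optimal_schedule_general
    (N : ℕ) (w : ℕ → ℝ) (hw : ∀ t, t ≤ N → 0 < w t)
    (ξ α β dmax : ℝ) (hξ : 0 < ξ) (hα : 0 ≤ α) (hβ : 0 ≤ β)
    (S : Set (Fin N → ℝ)) (hne : S.Nonempty) (hcomp : IsCompact S)
    (hperm : ∀ d ∈ S, ∀ σ : Equiv.Perm (Fin N), (d ∘ σ) ∈ S)
    (hbox : ∀ d ∈ S, ∀ t, 0 ≤ d t ∧ d t ≤ dmax) :
    ∃ dstar ∈ S,
      (∀ i j : Fin N, i ≤ j → dstar j ≤ dstar i) ∧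
      ∀ d ∈ S,
        (∑ t ∈ Finset.range (N + 1), w t * Real.exp (-ξ *
            ∑ k ∈ Finset.univ.filter (fun k : Fin N => (k : ℕ) + 1 < t),
              (α * dstar k + β * dstar k ^ 2))) ≤
          ∑ t ∈ Finset.range (N + 1), w t * Real.exp (-ξ *
            ∑ k ∈ Finset.univ.filter (fun k : Fin N => (k : ℕ) + 1 < t),
              (α * d k + β * d k ^ 2)) := by
  obtain ⟨d₀, hd₀S, hmin⟩ := hcomp.exists_isMinOn hne continuous_scheduleCost.continuousOn
  obtain ⟨σ, hσ⟩ := Tuple.exists_antitone_comp_perm d₀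
  have hsorted : d₀ ∘ σ ∈ S := hperm d₀ hd₀S σ
  refine ⟨d₀ ∘ σ, hsorted, fun i j hij => hσ hij, fun d hd => ?_⟩
  have hunsort : (d₀ ∘ σ) ∘ σ.symm = d₀ := by ext; simp
  calc scheduleCost N w ξ α β (d₀ ∘ σ)
      ≤ scheduleCost N w ξ α β ((d₀ ∘ σ) ∘ σ.symm) :=
        scheduleCost_le_comp_perm (fun t ht => (hw t ht).le) hξ.le hα hβ hσ
          (fun k => (hbox _ hsorted k).1) σ.symm
    _ = scheduleCost N w ξ α β d₀ := by rw [hunsort]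
    _ ≤ scheduleCost N w ξ α β d := hmin hd

/-- Radiotherapy half of Lemma 2: over a nonempty, compact,
permutation-invariant feasible set, there exists an optimal dose schedule
that is nonincreasing in time. -/
theorem exists_nonincreasing_optimal_schedule
    (N : ℕ) (w : ℕ → ℝ) (hw : ∀ t, t ≤ N → 0 < w t)
    (ξ α β dmax : ℝ) (hξ : 0 < ξ) (hα : 0 ≤ α) (hβ : 0 ≤ β) (hdmax : 0 < dmax)
    (S : Set (Fin N → ℝ)) (hne : S.Nonempty) (hcomp : IsCompact S)
    (hperm : ∀ d ∈ S, ∀ σ : Equiv.Perm (Fin N), (d ∘ σ) ∈ S)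
    (hbox : ∀ d ∈ S, ∀ t, 0 ≤ d t ∧ d t ≤ dmax) :
    ∃ dstar ∈ S,
      (∀ i j : Fin N, i ≤ j → dstar j ≤ dstar i) ∧
      ∀ d ∈ S,
        (∑ t ∈ Finset.range (N + 1), w t * Real.exp (-ξ *
            ∑ k ∈ Finset.univ.filter (fun k : Fin N => (k : ℕ) + 1 < t),
              (α * dstar k + β * dstar k ^ 2))) ≤
          ∑ t ∈ Finset.range (N + 1), w t * Real.exp (-ξ *
            ∑ k ∈ Finset.univ.filter (fun k : Fin N => (k : ℕ) + 1 < t),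
              (α * d k + β * d k ^ 2)) :=
  exists_nonincreasing_optimal_schedule_general N w hw ξ α β dmax hξ hα hβ S hne hcomp hperm hbox
end

section
/- Consider the DP dominance relation for states at stage t: given states B₁ = (u₁,v₁,s₁,w₁,û₁,v̂₁) and B₂ = (u₂,v₂,s₂,w₂,û₂,v̂₂) with cost-to-go values J₂ ≤ J₁, and suppose u₂ ≤ u₁, v₂ ≤ v₁, s₁ = s₂, w₂ ≥ w₁, û₂ ≥ û₁, v̂₂ ≥ v̂₁, and the per-stage cost at stage t+1, L(d, c, B) = X₀^ξ ∑_i p_i exp(−ξ·Ψ_i(d,c,B) + μ_i(T−t−1) − ω_i C_max) with Ψ_i(d,c,B) = û + α(B)d + v̂ + β(B)d² + (θ − ω_i/ξ)(s + c) + ψ(w + dc) − (ln 2/τ_d)(t+1−T_k)⁺, where α(B), β(B) are nondecreasing functions of û + v̂ + θs + ψw. Then for any admissible control (d, c) with d, c ≥ 0 and θξ ≥ max_i ω_i, ψ ≥ 0: J₂ + L(d, c, B₂) ≤ J₁ + L(d, c, B₁). -/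
/-!
The exponent Ψ_i grows with û, v̂ and w at fixed s and controls d, c ≥ 0: the radiosensitivities
α, β are monotone in the cumulative kill û + v̂ + θs + ψw, which itself grows, and ψ ≥ 0. The
per-stage cost is a positive combination of exp(-ξ Ψ_i), so it can only drop from B₁ to B₂.
-/

open Finset Real

/-- The paper's Ψ_i without its time-dependent repopulation term, with `κ = θ - ω_i / ξ`. -/
def logKill (α β : ℝ → ℝ) (θ ψ κ uh vh s w d c : ℝ) : ℝ :=
  uh + α (uh + vh + θ * s + ψ * w) * d + vh + β (uh + vh + θ * s + ψ * w) * d ^ 2 +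
    κ * (s + c) + ψ * (w + d * c)

theorem logKill_mono {α β : ℝ → ℝ} (hα : Monotone α) (hβ : Monotone β)
    {θ ψ κ s d c : ℝ} (hψ : 0 ≤ ψ) (hd : 0 ≤ d)
    {uh₁ vh₁ w₁ uh₂ vh₂ w₂ : ℝ} (huh : uh₁ ≤ uh₂) (hvh : vh₁ ≤ vh₂) (hw : w₁ ≤ w₂) :
    logKill α β θ ψ κ uh₁ vh₁ s w₁ d c ≤ logKill α β θ ψ κ uh₂ vh₂ s w₂ d c := by
  have hkill : uh₁ + vh₁ + θ * s + ψ * w₁ ≤ uh₂ + vh₂ + θ * s + ψ * w₂ := by gcongr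
  unfold logKill
  gcongr
  · exact hα hkill
  · exact hβ hkill

theorem dp_state_dominance_general
    (n : ℕ) (X₀ ξ θ ψ Cmax τd T Tk : ℝ) (t : ℕ)
    (p μ ω : ℕ → ℝ)
    (hX₀ : 0 < X₀) (hξ : 0 < ξ) (hψ : 0 ≤ ψ)
    (hp : ∀ i, i < n → 0 < p i)
    (αf βf : ℝ → ℝ) (hαf : Monotone αf) (hβf : Monotone βf)
    (s₁ w₁ uh₁ vh₁ s₂ w₂ uh₂ vh₂ J₁ J₂ : ℝ)
    (hJ : J₂ ≤ J₁)
    (hs : s₁ = s₂) (hw : w₁ ≤ w₂)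
    (huh : uh₁ ≤ uh₂) (hvh : vh₁ ≤ vh₂)
    (d c : ℝ) (hd : 0 ≤ d) :
    J₂ + X₀ ^ ξ * ∑ i ∈ Finset.range n, p i *
        Real.exp (-ξ *
            (uh₂ + αf (uh₂ + vh₂ + θ * s₂ + ψ * w₂) * d +
              vh₂ + βf (uh₂ + vh₂ + θ * s₂ + ψ * w₂) * d ^ 2 +
              (θ - ω i / ξ) * (s₂ + c) + ψ * (w₂ + d * c) -
              Real.log 2 / τd * max ((t : ℝ) + 1 - Tk) 0) +
          μ i * (T - ((t : ℝ) + 1)) - ω i * Cmax) ≤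
      J₁ + X₀ ^ ξ * ∑ i ∈ Finset.range n, p i *
        Real.exp (-ξ *
            (uh₁ + αf (uh₁ + vh₁ + θ * s₁ + ψ * w₁) * d +
              vh₁ + βf (uh₁ + vh₁ + θ * s₁ + ψ * w₁) * d ^ 2 +
              (θ - ω i / ξ) * (s₁ + c) + ψ * (w₁ + d * c) -
              Real.log 2 / τd * max ((t : ℝ) + 1 - Tk) 0) +
          μ i * (T - ((t : ℝ) + 1)) - ω i * Cmax) := by
  subst hs
  simp only [neg_mul]
  gcongr ?_ + _ * ∑ i ∈ range n, _ * exp (-(_ * (?_ - _)) + _ - _) with i hi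
  · exact (hp i (mem_range.mp hi)).le
  · exact logKill_mono hαf hβf hψ hd huh hvh hw

/-- Lemma 3 of the paper: DP state dominance. A dominated state can be pruned
since its cost-to-go plus per-stage cost is never smaller under any admissible
control. -/
theorem dp_state_dominance
    (n : ℕ) (X₀ ξ θ ψ Cmax τd T Tk : ℝ) (t : ℕ)
    (p μ ω : ℕ → ℝ)
    (hX₀ : 0 < X₀) (hξ : 0 < ξ) (hθ : 0 < θ) (hψ : 0 ≤ ψ)
    (hCmax : 0 < Cmax) (hτd : 0 < τd)
    (hp : ∀ i, i < n → 0 < p i) (hω : ∀ i, i < n → 0 ≤ ω i)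
    (αf βf : ℝ → ℝ) (hαf : Monotone αf) (hβf : Monotone βf)
    (hαf0 : ∀ x, 0 ≤ αf x) (hβf0 : ∀ x, 0 ≤ βf x)
    (u₁ v₁ s₁ w₁ uh₁ vh₁ u₂ v₂ s₂ w₂ uh₂ vh₂ J₁ J₂ : ℝ)
    (hJ : J₂ ≤ J₁)
    (hu : u₂ ≤ u₁) (hv : v₂ ≤ v₁) (hs : s₁ = s₂) (hw : w₁ ≤ w₂)
    (huh : uh₁ ≤ uh₂) (hvh : vh₁ ≤ vh₂)
    (d c : ℝ) (hd : 0 ≤ d) (hc : 0 ≤ c)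
    (hcond : ∀ i, i < n → ω i ≤ θ * ξ) :
    J₂ + X₀ ^ ξ * ∑ i ∈ Finset.range n, p i *
        Real.exp (-ξ *
            (uh₂ + αf (uh₂ + vh₂ + θ * s₂ + ψ * w₂) * d +
              vh₂ + βf (uh₂ + vh₂ + θ * s₂ + ψ * w₂) * d ^ 2 +
              (θ - ω i / ξ) * (s₂ + c) + ψ * (w₂ + d * c) -
              Real.log 2 / τd * max ((t : ℝ) + 1 - Tk) 0) +
          μ i * (T - ((t : ℝ) + 1)) - ω i * Cmax) ≤
      J₁ + X₀ ^ ξ * ∑ i ∈ Finset.range n, p i *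
        Real.exp (-ξ *
            (uh₁ + αf (uh₁ + vh₁ + θ * s₁ + ψ * w₁) * d +
              vh₁ + βf (uh₁ + vh₁ + θ * s₁ + ψ * w₁) * d ^ 2 +
              (θ - ω i / ξ) * (s₁ + c) + ψ * (w₁ + d * c) -
              Real.log 2 / τd * max ((t : ℝ) + 1 - Tk) 0) +
          μ i * (T - ((t : ℝ) + 1)) - ω i * Cmax) :=
  dp_state_dominance_general n X₀ ξ θ ψ Cmax τd T Tk t p μ ω hX₀ hξ hψ hp αf βf hαf hβf s₁ w₁ uh₁
    vh₁ s₂ w₂ uh₂ vh₂ J₁ J₂ hJ hs hw huh hvh d c hd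
end

section
/- Let d' be obtained from a nonnegative vector d ∈ ℝ^N by swapping entries at positions i < j with d_j > d_i. For any nonnegative fixed vector c ∈ ℝ^N and any constants α, β, θ ≥ 0 and ξ > 0, the objective f(d, c) = ∑_{t=0}^{N+1} exp(−ξ(∑_{k=1}^{t−1}(α d_k + β d_k² + θ c_k)) + r_t) with arbitrary constants r_t satisfies f(d', c) ≤ f(d, c); no monotonicity assumption on c is needed. -/
open Finset Real

/-- Key step of Lemma 2 (with ψ = 0): swapping a later, larger radiation dose
forward decreases the metastatic objective, for every chemotherapy schedule. -/
theorem swap_decreases_objective_any_chemo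
    (N : ℕ) (d c : ℕ → ℝ) (hd : ∀ k, 0 ≤ d k) (hc : ∀ k, 0 ≤ c k)
    (α β θ ξ : ℝ) (hα : 0 ≤ α) (hβ : 0 ≤ β) (hθ : 0 ≤ θ) (hξ : 0 < ξ)
    (r : ℕ → ℝ)
    (i j : ℕ) (hij : i < j) (hjN : j < N) (hdij : d i < d j)
    (d' : ℕ → ℝ) (hd'i : d' i = d j) (hd'j : d' j = d i)
    (hd'k : ∀ k, k ≠ i → k ≠ j → d' k = d k) :
    ∑ t ∈ Finset.range (N + 2),
        Real.exp (-ξ * (∑ k ∈ Finset.range (t - 1),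
          (α * d' k + β * d' k ^ 2 + θ * c k)) + r t) ≤
      ∑ t ∈ Finset.range (N + 2),
        Real.exp (-ξ * (∑ k ∈ Finset.range (t - 1),
          (α * d k + β * d k ^ 2 + θ * c k)) + r t) := by
  -- key: every prefix sum of the radiation part is ≥ after the swap
  have key : ∀ m : ℕ, ∑ k ∈ Finset.range m, (α * d k + β * d k ^ 2)
      ≤ ∑ k ∈ Finset.range m, (α * d' k + β * d' k ^ 2) := by
    intro m
    rcases le_or_gt m i with hmi | him
    · apply le_of_eq
      apply Finset.sum_congr rfl
      intro k hk
      have hk' := Finset.mem_range.mp hk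
      rw [hd'k k (by omega) (by omega)]
    rcases le_or_gt m j with hmj | hjm
    · -- i < m ≤ j : pointwise, only index i changes, and it increases
      apply Finset.sum_le_sum
      intro k hk
      have hk' := Finset.mem_range.mp hk
      rcases eq_or_ne k i with rfl | hki
      · rw [hd'i]
        exact add_le_add (mul_le_mul_of_nonneg_left hdij.le hα)
          (mul_le_mul_of_nonneg_left (pow_le_pow_left₀ (hd k) hdij.le 2) hβ)
      · rw [hd'k k hki (by omega)]
    · -- j < m : sums are equal (transposition within the prefix)
      apply le_of_eq
      refine Finset.sum_nbij' (fun k => Equiv.swap i j k) (fun k => Equiv.swap i j k)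
        ?_ ?_ ?_ ?_ ?_
      · intro k hk
        have hk' := Finset.mem_range.mp hk
        rcases eq_or_ne k i with rfl | hki
        · simp [Equiv.swap_apply_left, Finset.mem_range]; omega
        rcases eq_or_ne k j with rfl | hkj
        · simp [Equiv.swap_apply_right, Finset.mem_range]; omega
        · rw [Equiv.swap_apply_of_ne_of_ne hki hkj]; exact hk
      · intro k hk
        have hk' := Finset.mem_range.mp hk
        rcases eq_or_ne k i with rfl | hki
        · simp [Equiv.swap_apply_left, Finset.mem_range]; omega
        rcases eq_or_ne k j with rfl | hkj
        · simp [Equiv.swap_apply_right, Finset.mem_range]; omega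
        · rw [Equiv.swap_apply_of_ne_of_ne hki hkj]; exact hk
      · intro k _; simp
      · intro k _; simp
      · intro k hk
        rcases eq_or_ne k i with rfl | hki
        · rw [Equiv.swap_apply_left, hd'j]
        rcases eq_or_ne k j with rfl | hkj
        · rw [Equiv.swap_apply_right, hd'i]
        · rw [Equiv.swap_apply_of_ne_of_ne hki hkj, hd'k k hki hkj]
  apply Finset.sum_le_sum
  intro t _
  apply Real.exp_le_exp.mpr
  have hsplit : ∀ e : ℕ → ℝ, ∑ k ∈ Finset.range (t-1),
      (α * e k + β * e k ^ 2 + θ * c k)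
      = (∑ k ∈ Finset.range (t-1), (α * e k + β * e k ^ 2))
        + ∑ k ∈ Finset.range (t-1), θ * c k := by
    intro e
    rw [← Finset.sum_add_distrib]
  rw [hsplit d, hsplit d']
  have := key (t - 1)
  nlinarith [this]
end
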